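/- arXiv:2009.02454 — 2 statements merged into one kernel-verified Lean document; each statement's English description precedes it below -/
import Mathlib

section
/- Localization of the infimum: suppose n > C. Then for every x ∈ E, the infimum defining fₙ(x) may be restricted to a ball, namely fₙ(x) = ⨅ { f(a) + n‖x − a‖ : a ∈ E, ‖x − a‖ ≤ 2C(h + ‖x‖)/(n − C) }. -/
/-!
Linear growth gives `f a + n‖x - a‖ ≥ -C(h + ‖x‖) + (n - C)‖x - a‖`. Outside the ball of radius
`2C(h + ‖x‖)/(n - C)` around `x` the right-hand side exceeds `C(h + ‖x‖) ≥ f x`, the value of the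
objective at the centre `a = x`, so points outside the ball never lower the infimum.
-/

open Set

theorem ciInf_eq_csInf_image_of_le_of_notMem {α β : Type*} [ConditionallyCompleteLinearOrder β]
    {g : α → β} {s : Set α} (hg : BddBelow (range g)) {x₀ : α} (hx₀ : x₀ ∈ s)
    (hout : ∀ a ∉ s, g x₀ ≤ g a) :
    ⨅ a, g a = sInf (g '' s) := by
  have : Nonempty α := ⟨x₀⟩
  have hs : BddBelow (g '' s) := hg.mono (image_subset_range g s)
  apply le_antisymm
  · exact le_csInf (hx₀ |> mem_image_of_mem g |> nonempty_of_mem)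
      (forall_mem_image.2 fun a _ => ciInf_le hg a)
  · refine le_ciInf fun a => ?_
    by_cases ha : a ∈ s
    · exact csInf_le hs (mem_image_of_mem g ha)
    · exact (csInf_le hs (mem_image_of_mem g hx₀)).trans (hout a ha)

theorem le_add_mul_norm_sub_of_abs_le {E : Type*} [SeminormedAddCommGroup E] {C h : ℝ}
    (hC : 0 ≤ C) {f : E → ℝ} (hf : ∀ a, |f a| ≤ C * (h + ‖a‖)) (n : ℝ) (x a : E) :
    -(C * (h + ‖x‖)) + (n - C) * ‖x - a‖ ≤ f a + n * ‖x - a‖ := by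
  have hfa : -(C * (h + ‖a‖)) ≤ f a := neg_le_of_abs_le (hf a)
  have hCa : C * ‖a‖ ≤ C * (‖x‖ + ‖x - a‖) :=
    mul_le_mul_of_nonneg_left (norm_le_norm_add_norm_sub x a) hC
  linarith

theorem stmt_3_general {E : Type*} [NormedAddCommGroup E] [NormedSpace ℝ E]
    (C h : ℝ) (hC : 0 ≤ C)
    (f : E → ℝ) (hf : ∀ a : E, |f a| ≤ C * (h + ‖a‖))
    (n : ℝ) (hn : C < n) (x : E) :
    (⨅ a : E, f a + n * ‖x - a‖) =
      sInf {v : ℝ | ∃ a : E, ‖x - a‖ ≤ 2 * C * (h + ‖x‖) / (n - C) ∧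
        v = f a + n * ‖x - a‖} := by
  have hnC : 0 < n - C := sub_pos.2 hn
  have hfx : |f x| ≤ C * (h + ‖x‖) := hf x
  have hlow := le_add_mul_norm_sub_of_abs_le hC hf n x
  have hset : {v : ℝ | ∃ a : E, ‖x - a‖ ≤ 2 * C * (h + ‖x‖) / (n - C) ∧
      v = f a + n * ‖x - a‖} =
      (fun a => f a + n * ‖x - a‖) '' {a | ‖x - a‖ ≤ 2 * C * (h + ‖x‖) / (n - C)} :=
    ext fun v => exists_congr fun a => and_congr_right fun _ => eq_comm
  rw [hset]
  refine ciInf_eq_csInf_image_of_le_of_notMem ⟨-(C * (h + ‖x‖)), ?_⟩ (x₀ := x) ?_ ?_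
  · rintro _ ⟨a, rfl⟩
    linarith [hlow a, mul_nonneg hnC.le (norm_nonneg (x - a))]
  · show ‖x - x‖ ≤ _
    rw [sub_self, norm_zero]
    exact div_nonneg (by linarith [abs_nonneg (f x)]) hnC.le
  · intro a ha
    have hfar : 2 * C * (h + ‖x‖) < ‖x - a‖ * (n - C) := (div_lt_iff₀ hnC).1 (not_le.1 ha)
    simp only [sub_self, norm_zero, mul_zero, add_zero]
    linarith [hlow a, le_of_abs_le hfx]

/-- Localization of the infimum: for `n > C`, the infimum defining
`fₙ(x) = ⨅ a, (f a + n‖x − a‖)` may be restricted to the ball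
`‖x − a‖ ≤ 2C(h + ‖x‖)/(n − C)`. -/
theorem stmt_3 {E : Type*} [NormedAddCommGroup E] [NormedSpace ℝ E]
    (C h : ℝ) (hC : 0 ≤ C) (hh : 0 ≤ h)
    (f : E → ℝ) (hf : ∀ a : E, |f a| ≤ C * (h + ‖a‖))
    (n : ℝ) (hn : C < n) (x : E) :
    (⨅ a : E, f a + n * ‖x - a‖) =
      sInf {v : ℝ | ∃ a : E, ‖x - a‖ ≤ 2 * C * (h + ‖x‖) / (n - C) ∧
        v = f a + n * ‖x - a‖} :=
  stmt_3_general C h hC f hf n hn x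
end

section
/- Pointwise monotone convergence: suppose in addition that f is continuous. Then for every x ∈ E, the nondecreasing sequence (fₙ(x))_{n ≥ C} converges to f(x) as n → ∞; equivalently, sup over real n ≥ C of fₙ(x) equals f(x). -/
open Filter Topology

noncomputable def lipschitzApprox {E : Type*} [SeminormedAddCommGroup E] (f : E → ℝ) (n : ℝ)
    (x : E) : ℝ :=
  ⨅ a : E, f a + n * ‖x - a‖

namespace lipschitzApprox

variable {E : Type*} [SeminormedAddCommGroup E] {f : E → ℝ} {x : E} {B C : ℝ}

lemma le_add_mul_norm_sub (hB : ∀ a, B ≤ f a + C * ‖x - a‖) {n : ℝ} (hn : C ≤ n) (a : E) :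
    B ≤ f a + n * ‖x - a‖ := by
  have := hB a
  have : C * ‖x - a‖ ≤ n * ‖x - a‖ := by gcongr
  linarith

lemma bddBelow_range (hB : ∀ a, B ≤ f a + C * ‖x - a‖) {n : ℝ} (hn : C ≤ n) :
    BddBelow (Set.range fun a => f a + n * ‖x - a‖) :=
  ⟨B, Set.forall_mem_range.2 (le_add_mul_norm_sub hB hn)⟩

lemma le_self (hB : ∀ a, B ≤ f a + C * ‖x - a‖) {n : ℝ} (hn : C ≤ n) :
    lipschitzApprox f n x ≤ f x := by
  simpa [lipschitzApprox] using ciInf_le (bddBelow_range hB hn) x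

/-- Near `x`, continuity keeps `f a` close to `f x`; far from `x`, the penalty `n‖x - a‖`
eventually beats the lower bound `B`. -/
lemma eventually_sub_le (hB : ∀ a, B ≤ f a + C * ‖x - a‖) (hfx : ContinuousAt f x)
    {ε : ℝ} (hε : 0 < ε) : ∀ᶠ n in atTop, f x - ε ≤ lipschitzApprox f n x := by
  obtain ⟨δ, hδ, hnear⟩ := Metric.continuousAt_iff.1 hfx ε hε
  have hpenalty : Tendsto (fun n : ℝ => (n - C) * δ) atTop atTop :=
    (tendsto_atTop_add_const_right _ (-C) tendsto_id).atTop_mul_const hδ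
  filter_upwards [hpenalty.eventually_ge_atTop (f x - B), eventually_ge_atTop C,
    eventually_ge_atTop 0] with n hfar hCn hn0
  refine le_ciInf fun a => ?_
  rcases lt_or_ge ‖x - a‖ δ with hxa | hxa
  · have := (abs_lt.1 (hnear (by rwa [dist_comm, dist_eq_norm]))).1
    have : 0 ≤ n * ‖x - a‖ := by positivity
    linarith
  · have := hB a
    have : (n - C) * δ ≤ (n - C) * ‖x - a‖ := by gcongr
    linarith

lemma tendsto (hB : ∀ a, B ≤ f a + C * ‖x - a‖) (hfx : ContinuousAt f x) :
    Tendsto (fun n => lipschitzApprox f n x) atTop (𝓝 (f x)) := by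
  refine tendsto_order.2 ⟨fun b hb => ?_, fun b hb => ?_⟩
  · filter_upwards [eventually_sub_le hB hfx (half_pos (sub_pos.2 hb))] with n hn
    linarith
  · filter_upwards [eventually_ge_atTop C] with n hn
    exact (le_self hB hn).trans_lt hb

lemma iSup_eq (hB : ∀ a, B ≤ f a + C * ‖x - a‖) (hfx : ContinuousAt f x) :
    ⨆ n : {n : ℝ // C ≤ n}, lipschitzApprox f n x = f x := by
  have : Nonempty {n : ℝ // C ≤ n} := ⟨⟨C, le_rfl⟩⟩
  have hbdd : BddAbove (Set.range fun n : {n : ℝ // C ≤ n} => lipschitzApprox f n x) :=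
    ⟨f x, Set.forall_mem_range.2 fun n => le_self hB n.2⟩
  refine le_antisymm (ciSup_le fun n => le_self hB n.2) (le_of_tendsto (tendsto hB hfx) ?_)
  filter_upwards [eventually_ge_atTop C] with n hn
  exact le_ciSup hbdd ⟨n, hn⟩

end lipschitzApprox

lemma neg_le_add_mul_norm_sub_of_abs_le {E : Type*} [SeminormedAddCommGroup E] {f : E → ℝ}
    {C h : ℝ} (hC : 0 ≤ C) (hf : ∀ a, |f a| ≤ C * (h + ‖a‖)) (x a : E) :
    -(C * (h + ‖x‖)) ≤ f a + C * ‖x - a‖ := by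
  have := neg_le_of_abs_le (hf a)
  have : C * (‖a‖ - ‖x‖) ≤ C * ‖x - a‖ := by
    gcongr
    simpa [norm_sub_rev] using norm_sub_norm_le a x
  linarith

theorem stmt_4_general {E : Type*} [NormedAddCommGroup E]
    (C h : ℝ) (hC : 0 ≤ C)
    (f : E → ℝ) (hf : ∀ a : E, |f a| ≤ C * (h + ‖a‖))
    (hcont : Continuous f) (x : E) :
    Tendsto (fun n : ℝ => ⨅ a : E, f a + n * ‖x - a‖) atTop (𝓝 (f x)) ∧
    (⨆ n : {n : ℝ // C ≤ n}, ⨅ a : E, f a + (n : ℝ) * ‖x - a‖) = f x := by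
  have hB := neg_le_add_mul_norm_sub_of_abs_le hC hf x
  exact ⟨lipschitzApprox.tendsto hB hcont.continuousAt,
    lipschitzApprox.iSup_eq hB hcont.continuousAt⟩

/-- Pointwise monotone convergence of the Lipschitz approximations: if `f` is
continuous with linear growth `|f a| ≤ C(h + ‖a‖)`, then for every `x`,
`fₙ(x) = ⨅ a, (f a + n‖x − a‖)` converges to `f(x)` as `n → ∞`; equivalently,
the supremum of `fₙ(x)` over real `n ≥ C` equals `f(x)`. -/
theorem stmt_4 {E : Type*} [NormedAddCommGroup E] [NormedSpace ℝ E]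
    (C h : ℝ) (hC : 0 ≤ C) (hh : 0 ≤ h)
    (f : E → ℝ) (hf : ∀ a : E, |f a| ≤ C * (h + ‖a‖))
    (hcont : Continuous f) (x : E) :
    Tendsto (fun n : ℝ => ⨅ a : E, f a + n * ‖x - a‖) atTop (𝓝 (f x)) ∧
    (⨆ n : {n : ℝ // C ≤ n}, ⨅ a : E, f a + (n : ℝ) * ‖x - a‖) = f x :=
  stmt_4_general C h hC f hf hcont x
end
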